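/- arXiv:2603.04765 — 6 statements merged into one kernel-verified Lean document; each statement's English description precedes it below -/
import Mathlib

section
/- Let Λ = Zu + Zv be a lattice in R² generated by a basis {u,v} of R². Let Q₁ = {(x,y) : xy ≥ 0} and Q₂ = {(x,y) : xy < 0}. If u attains the minimum ℓ¹-norm among nonzero lattice points in Λ ∩ Q₁, and v attains the minimum ℓ¹-norm among lattice points in Λ ∩ Q₂, then {u,v} is a Z-basis of Λ, i.e., Λ = Zu + Zv. -/
open MeasureTheory Submodule

private lemma abs_add_eq_of_mul_nonneg' {a b : ℝ} (h : 0 ≤ a * b) : |a| + |b| = |a + b| := by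
  rcases le_or_gt 0 a with ha | ha
  · rcases le_or_gt 0 b with hb | hb
    · rw [abs_of_nonneg ha, abs_of_nonneg hb, abs_of_nonneg (by linarith)]
    · have ha0 : a = 0 := le_antisymm (by nlinarith) ha
      simp [ha0]
  · rcases le_or_gt 0 b with hb | hb
    · have hb0 : b = 0 := le_antisymm (by nlinarith) hb
      simp [hb0]
    · rw [abs_of_neg ha, abs_of_neg hb, abs_of_neg (by linarith)]; ring

private lemma abs_add_eq_sub_of_mul_nonpos' {a b : ℝ} (h : a * b ≤ 0) : |a| + |b| = |a - b| := by
  have := abs_add_eq_of_mul_nonneg' (a := a) (b := -b) (by nlinarith)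
  simpa [sub_eq_add_neg] using this

private lemma pair_indep' (w₁ w₂ : ℝ × ℝ) (hD : w₁.1 * w₂.2 - w₁.2 * w₂.1 ≠ 0) :
    LinearIndependent ℝ ![w₁, w₂] := by
  rw [LinearIndependent.pair_iff]
  intro a b hab
  have h1 : a * w₁.1 + b * w₂.1 = 0 := by
    have := congrArg Prod.fst hab; simpa [smul_eq_mul] using this
  have h2 : a * w₁.2 + b * w₂.2 = 0 := by
    have := congrArg Prod.snd hab; simpa [smul_eq_mul] using this
  constructor
  · by_contra ha
    apply hD
    have : a * (w₁.1 * w₂.2 - w₁.2 * w₂.1) = 0 := by linear_combination w₂.2 * h1 - w₂.1 * h2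
    rcases mul_eq_zero.mp this with h | h
    · exact absurd h ha
    · exact h
  · by_contra hb
    apply hD
    have : b * (w₁.1 * w₂.2 - w₁.2 * w₂.1) = 0 := by linear_combination -w₁.2 * h1 + w₁.1 * h2
    rcases mul_eq_zero.mp this with h | h
    · exact absurd h hb
    · exact h

private lemma comb_fst' (m n : ℤ) (p q : ℝ × ℝ) :
    (m • p + n • q).1 = (m : ℝ) * p.1 + (n : ℝ) * q.1 := by
  simp [zsmul_eq_mul]

private lemma comb_snd' (m n : ℤ) (p q : ℝ × ℝ) :
    (m • p + n • q).2 = (m : ℝ) * p.2 + (n : ℝ) * q.2 := by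
  simp [zsmul_eq_mul]

/-- Minkowski step: if the open "rotated box" `{|x+y| < s, |x-y| < t}` contains no nonzero
lattice point, then `s * t ≤ 2 * |det|`. -/
private lemma key' (w₁ w₂ : ℝ × ℝ) (hD : w₁.1 * w₂.2 - w₁.2 * w₂.1 ≠ 0) (s t : ℝ)
    (hs : 0 < s) (ht : 0 < t)
    (hC : ∀ z : ℝ × ℝ, (∃ m n : ℤ, z = m • w₁ + n • w₂) → z ≠ 0 →
      ¬(|z.1 + z.2| < s ∧ |z.1 - z.2| < t)) :
    s * t ≤ 2 * |w₁.1 * w₂.2 - w₁.2 * w₂.1| := by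
  by_contra hcon
  push_neg at hcon
  have hli := pair_indep' w₁ w₂ hD
  have hcard : Fintype.card (Fin 2) = Module.finrank ℝ (ℝ × ℝ) := by simp
  let b : Module.Basis (Fin 2) ℝ (ℝ × ℝ) := basisOfLinearIndependentOfCardEqFinrank hli hcard
  have hb : ⇑b = ![w₁, w₂] := coe_basisOfLinearIndependentOfCardEqFinrank hli hcard
  have hrange : Set.range ⇑b = {w₁, w₂} := by
    rw [hb]; ext z
    simp [Fin.exists_fin_two]
    tauto
  have hmem : ∀ z : ℝ × ℝ,
      z ∈ (span ℤ (Set.range ⇑b)).toAddSubgroup ↔ ∃ m n : ℤ, z = m • w₁ + n • w₂ := by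
    intro z
    rw [Submodule.mem_toAddSubgroup, hrange, Submodule.mem_span_pair]
    constructor
    · rintro ⟨m, n, h⟩; exact ⟨m, n, h.symm⟩
    · rintro ⟨m, n, h⟩; exact ⟨m, n, h.symm⟩
  haveI : Countable ((span ℤ (Set.range ⇑b)).toAddSubgroup) :=
    inferInstanceAs (Countable (span ℤ (Set.range ⇑b)))
  have fund := ZSpan.isAddFundamentalDomain' b (volume : Measure (ℝ × ℝ))
  have hdetb : (Module.Basis.finTwoProd ℝ).det ⇑b = w₁.1 * w₂.2 - w₁.2 * w₂.1 := by
    rw [Module.Basis.det_apply, Matrix.det_fin_two]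
    simp [Module.Basis.toMatrix_apply, hb]
    ring
  have hvolF0 : volume (ZSpan.fundamentalDomain (Module.Basis.finTwoProd ℝ)) = 1 := by
    have h01 : ZSpan.fundamentalDomain (Module.Basis.finTwoProd ℝ) =
        Set.Ico (0:ℝ) 1 ×ˢ Set.Ico (0:ℝ) 1 := by
      ext z
      simp [ZSpan.fundamentalDomain, Fin.forall_fin_two]
    rw [h01, Measure.volume_eq_prod, Measure.prod_prod, Real.volume_Ico]
    simp
  have hvolF : volume (ZSpan.fundamentalDomain b) =
      ENNReal.ofReal |w₁.1 * w₂.2 - w₁.2 * w₂.1| := by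
    rw [ZSpan.measure_fundamentalDomain b volume (Module.Basis.finTwoProd ℝ), hdetb, hvolF0, mul_one]
  set C : Set (ℝ × ℝ) := {z : ℝ × ℝ | |z.1 + z.2| < s ∧ |z.1 - z.2| < t} with hCdef
  have hvolC : volume C = ENNReal.ofReal (2 * (s * t)) := by
    set f : (ℝ × ℝ) →ₗ[ℝ] (ℝ × ℝ) :=
      (LinearMap.fst ℝ ℝ ℝ + LinearMap.snd ℝ ℝ ℝ).prod (LinearMap.fst ℝ ℝ ℝ - LinearMap.snd ℝ ℝ ℝ)
      with hf
    have hdet : LinearMap.det f = -2 := by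
      rw [← LinearMap.det_toMatrix (Module.Basis.finTwoProd ℝ), Matrix.det_fin_two]
      simp [LinearMap.toMatrix_apply, hf]
      norm_num
    have hpre : C = ⇑f ⁻¹' (Set.Ioo (-s) s ×ˢ Set.Ioo (-t) t) := by
      ext z
      simp [hCdef, hf, abs_lt, and_assoc, and_comm, and_left_comm]
    rw [hpre, Measure.addHaar_preimage_linearMap volume (by rw [hdet]; norm_num),
      Measure.volume_eq_prod, Measure.prod_prod, Real.volume_Ioo, Real.volume_Ioo, hdet,
      ← ENNReal.ofReal_mul (by linarith), ← ENNReal.ofReal_mul (abs_nonneg _)]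
    congr 1
    rw [abs_of_nonpos (by norm_num)]
    ring
  have hsymm : ∀ x ∈ C, -x ∈ C := by
    intro x hx
    simp only [hCdef, Set.mem_setOf_eq] at hx ⊢
    constructor
    · rw [show (-x).1 + (-x).2 = -(x.1 + x.2) by
        simp only [Prod.fst_neg, Prod.snd_neg]; ring, abs_neg]
      exact hx.1
    · rw [show (-x).1 - (-x).2 = -(x.1 - x.2) by
        simp only [Prod.fst_neg, Prod.snd_neg]; ring, abs_neg]
      exact hx.2
  have hconv : Convex ℝ C := by
    have hCi : C = {z : ℝ × ℝ | |z.1 + z.2| < s} ∩ {z : ℝ × ℝ | |z.1 - z.2| < t} := rfl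
    rw [hCi]
    apply Convex.inter
    · have := (convex_Ioo (-s) s).linear_preimage (LinearMap.fst ℝ ℝ ℝ + LinearMap.snd ℝ ℝ ℝ)
      rw [show {z : ℝ × ℝ | |z.1 + z.2| < s} = ⇑(LinearMap.fst ℝ ℝ ℝ + LinearMap.snd ℝ ℝ ℝ) ⁻¹' Set.Ioo (-s) s by
        ext z; simp [abs_lt]]
      exact this
    · have := (convex_Ioo (-t) t).linear_preimage (LinearMap.fst ℝ ℝ ℝ - LinearMap.snd ℝ ℝ ℝ)
      rw [show {z : ℝ × ℝ | |z.1 - z.2| < t} = ⇑(LinearMap.fst ℝ ℝ ℝ - LinearMap.snd ℝ ℝ ℝ) ⁻¹' Set.Ioo (-t) t by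
        ext z; simp [abs_lt]]
      exact this
  have hineq : volume (ZSpan.fundamentalDomain b) * 2 ^ Module.finrank ℝ (ℝ × ℝ) < volume C := by
    rw [hvolF, hvolC]
    have h2 : Module.finrank ℝ (ℝ × ℝ) = 2 := by simp
    rw [h2]
    calc ENNReal.ofReal |w₁.1 * w₂.2 - w₁.2 * w₂.1| * 2 ^ 2
        = ENNReal.ofReal (|w₁.1 * w₂.2 - w₁.2 * w₂.1| * 4) := by
          rw [ENNReal.ofReal_mul (abs_nonneg _)]
          norm_num
      _ < ENNReal.ofReal (2 * (s * t)) := by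
          rw [ENNReal.ofReal_lt_ofReal_iff (by positivity)]
          linarith
  obtain ⟨x, hx0, hxC⟩ :=
    exists_ne_zero_mem_lattice_of_measure_mul_two_pow_lt_measure fund hsymm hconv hineq
  set z : ℝ × ℝ := ((x : (span ℤ (Set.range ⇑b)).toAddSubgroup) : ℝ × ℝ) with hzdef
  have hzΛ : ∃ m n : ℤ, z = m • w₁ + n • w₂ := (hmem z).mp x.2
  have hz0 : z ≠ 0 := by
    intro h
    exact hx0 (Subtype.ext h)
  exact hC z hzΛ hz0 hxC

/-- If `u` minimizes the ℓ¹-norm among nonzero lattice points with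
`xy ≥ 0` and `v` minimizes it among lattice points with `xy < 0`, then `{u,v}`
is a ℤ-basis of the lattice. -/
theorem stmt0 (w₁ w₂ : ℝ × ℝ) (hbasis : w₁.1 * w₂.2 - w₁.2 * w₂.1 ≠ 0)
    (Λ : Set (ℝ × ℝ)) (hΛ : Λ = {x | ∃ m n : ℤ, x = m • w₁ + n • w₂})
    (u v : ℝ × ℝ)
    (huΛ : u ∈ Λ) (hu0 : u ≠ 0) (huQ : u.1 * u.2 ≥ 0)
    (humin : ∀ w ∈ Λ, w ≠ 0 → w.1 * w.2 ≥ 0 → |u.1| + |u.2| ≤ |w.1| + |w.2|)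
    (hvΛ : v ∈ Λ) (hvQ : v.1 * v.2 < 0)
    (hvmin : ∀ w ∈ Λ, w.1 * w.2 < 0 → |v.1| + |v.2| ≤ |w.1| + |w.2|) :
    Λ = {x | ∃ m n : ℤ, x = m • u + n • v} := by
  -- notation
  set s : ℝ := |u.1| + |u.2| with hsdef
  set t : ℝ := |v.1| + |v.2| with htdef
  have hv1 : v.1 ≠ 0 := fun h => by rw [h] at hvQ; simp at hvQ
  have hv2 : v.2 ≠ 0 := fun h => by rw [h] at hvQ; simp at hvQ
  have hu12 : u.1 ≠ 0 ∨ u.2 ≠ 0 := by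
    by_contra h
    push_neg at h
    exact hu0 (Prod.ext h.1 h.2)
  have hs : 0 < s := by
    rcases hu12 with h | h
    · have := abs_pos.mpr h; have := abs_nonneg u.2; linarith
    · have := abs_pos.mpr h; have := abs_nonneg u.1; linarith
  have ht : 0 < t := by
    have := abs_pos.mpr hv1; have := abs_pos.mpr hv2; linarith
  -- the Minkowski bound
  have hst : s * t ≤ 2 * |w₁.1 * w₂.2 - w₁.2 * w₂.1| := by
    apply key' w₁ w₂ hbasis s t hs ht
    intro z hzΛ hz0 hzC
    have hzΛ' : z ∈ Λ := by rw [hΛ]; exact hzΛ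
    rcases le_or_gt 0 (z.1 * z.2) with hq | hq
    · have h1 := humin z hzΛ' hz0 hq
      rw [abs_add_eq_of_mul_nonneg' hq] at h1
      linarith [hzC.1]
    · have h1 := hvmin z hzΛ' hq
      rw [abs_add_eq_sub_of_mul_nonpos' hq.le] at h1
      linarith [hzC.2]
  -- integer coordinates of u and v
  rw [hΛ] at huΛ hvΛ
  obtain ⟨a, b, hu⟩ := huΛ
  obtain ⟨c, d, hv⟩ := hvΛ
  have hu1 : u.1 = (a : ℝ) * w₁.1 + (b : ℝ) * w₂.1 := by rw [hu, comb_fst']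
  have hu2 : u.2 = (a : ℝ) * w₁.2 + (b : ℝ) * w₂.2 := by rw [hu, comb_snd']
  have hvv1 : v.1 = (c : ℝ) * w₁.1 + (d : ℝ) * w₂.1 := by rw [hv, comb_fst']
  have hvv2 : v.2 = (c : ℝ) * w₁.2 + (d : ℝ) * w₂.2 := by rw [hv, comb_snd']
  -- determinant identity
  have hdetuv : u.1 * v.2 - u.2 * v.1 =
      ((a * d - b * c : ℤ) : ℝ) * (w₁.1 * w₂.2 - w₁.2 * w₂.1) := by
    rw [hu1, hu2, hvv1, hvv2]; push_cast; ring
  -- the determinant of (u, v) is nonzero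
  have hduv : u.1 * v.2 - u.2 * v.1 ≠ 0 := by
    intro h
    have h0 : u.1 * v.2 = u.2 * v.1 := by linarith
    have hsq : (u.1 * v.2) * (u.2 * v.1) = (u.1 * u.2) * (v.1 * v.2) := by ring
    have h1 : u.1 * v.2 = 0 := by nlinarith [sq_nonneg (u.1 * v.2)]
    have h2 : u.2 * v.1 = 0 := by rw [← h0]; exact h1
    have hu1z : u.1 = 0 := by
      rcases mul_eq_zero.mp h1 with h' | h'
      · exact h'
      · exact absurd h' hv2
    have hu2z : u.2 = 0 := by
      rcases mul_eq_zero.mp h2 with h' | h'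
      · exact h'
      · exact absurd h' hv1
    exact hu0 (Prod.ext hu1z hu2z)
  -- strict bound for |det(u,v)|
  have hlt : |u.1 * v.2 - u.2 * v.1| < s * t := by
    have habs : |u.1 * v.2 - u.2 * v.1| ≤ |u.1| * |v.2| + |u.2| * |v.1| := by
      calc |u.1 * v.2 - u.2 * v.1| ≤ |u.1 * v.2| + |u.2 * v.1| := abs_sub _ _
        _ = |u.1| * |v.2| + |u.2| * |v.1| := by rw [abs_mul, abs_mul]
    have hpos : 0 < |u.1| * |v.1| + |u.2| * |v.2| := by
      rcases hu12 with h | h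
      · have h1 := abs_pos.mpr h
        have h2 := abs_pos.mpr hv1
        nlinarith [abs_nonneg u.2, abs_nonneg v.2]
      · have h1 := abs_pos.mpr h
        have h2 := abs_pos.mpr hv2
        nlinarith [abs_nonneg u.1, abs_nonneg v.1]
    have hexp : s * t = |u.1| * |v.1| + |u.1| * |v.2| + |u.2| * |v.1| + |u.2| * |v.2| := by
      rw [hsdef, htdef]; ring
    linarith
  -- conclude |a*d - b*c| = 1
  set e : ℤ := a * d - b * c with hedef
  have he0 : e ≠ 0 := by
    intro h
    rw [hdetuv, h] at hduv
    simp at hduv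
  have heabs : |(e : ℝ)| < 2 := by
    have hDpos : 0 < |w₁.1 * w₂.2 - w₁.2 * w₂.1| := abs_pos.mpr hbasis
    have := hlt.trans_le hst
    rw [hdetuv, abs_mul] at this
    nlinarith
  have heint : |e| < 2 := by exact_mod_cast (heabs : |(e:ℝ)| < (2:ℝ))
  have he1 : e = 1 ∨ e = -1 := by
    have h1 := abs_lt.mp heint
    rcases lt_trichotomy e 0 with h | h | h
    · right; omega
    · exact absurd h he0
    · left; omega
  have hee : ((a:ℝ) * d - (b:ℝ) * c) * ((a:ℝ) * d - (b:ℝ) * c) = 1 := by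
    have : (e : ℝ) * (e : ℝ) = 1 := by
      rcases he1 with h | h <;> rw [h] <;> norm_num
    rw [hedef] at this
    push_cast at this
    linarith [this]
  -- final set equality
  rw [hΛ]
  ext x
  simp only [Set.mem_setOf_eq]
  constructor
  · rintro ⟨m, n, rfl⟩
    refine ⟨m * (e * d) - n * (e * c), -(m * (e * b)) + n * (e * a), ?_⟩
    refine Prod.ext ?_ ?_
    · rw [comb_fst', comb_fst', hu1, hvv1]
      push_cast [hedef]
      linear_combination (-(m:ℝ) * w₁.1 - (n:ℝ) * w₂.1) * hee
    · rw [comb_snd', comb_snd', hu2, hvv2]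
      push_cast [hedef]
      linear_combination (-(m:ℝ) * w₁.2 - (n:ℝ) * w₂.2) * hee
  · rintro ⟨m, n, rfl⟩
    refine ⟨m * a + n * c, m * b + n * d, ?_⟩
    refine Prod.ext ?_ ?_
    · rw [comb_fst', comb_fst', hu1, hvv1]
      push_cast
      ring
    · rw [comb_snd', comb_snd', hu2, hvv2]
      push_cast
      ring
end

section
/- Let Λ ⊆ R² be a lattice containing a nonzero point on the x-axis, and let d_x > 0 be the least positive real number with (d_x, 0) ∈ Λ. Then the quotient map π : R² → R²/Λ is injective on the open rectangle (0, d_x) × (0, d(Λ)/d_x). -/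
/-- The quotient map is injective on the open rectangle
`(0, dₓ) × (0, d(Λ)/dₓ)`. -/
theorem stmt2 (w₁ w₂ : ℝ × ℝ) (hbasis : w₁.1 * w₂.2 - w₁.2 * w₂.1 ≠ 0)
    (Λ : Set (ℝ × ℝ)) (hΛ : Λ = {x | ∃ m n : ℤ, x = m • w₁ + n • w₂})
    (d : ℝ) (hd : d = |w₁.1 * w₂.2 - w₁.2 * w₂.1|)
    (dx : ℝ) (hdx : IsLeast {a : ℝ | 0 < a ∧ (a, (0:ℝ)) ∈ Λ} dx) :
    ∀ x ∈ Set.Ioo (0:ℝ) dx ×ˢ Set.Ioo (0:ℝ) (d / dx),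
      ∀ x' ∈ Set.Ioo (0:ℝ) dx ×ˢ Set.Ioo (0:ℝ) (d / dx),
        x - x' ∈ Λ → x = x' := by
  subst hΛ
  obtain ⟨⟨hdxpos, a, b, hab⟩, hmin⟩ := hdx
  have hab1 : dx = (a:ℝ) * w₁.1 + (b:ℝ) * w₂.1 := by
    have := congrArg Prod.fst hab
    simpa [zsmul_eq_mul] using this
  have hab2 : (a:ℝ) * w₁.2 + (b:ℝ) * w₂.2 = 0 := by
    have := congrArg Prod.snd hab
    simpa [zsmul_eq_mul, eq_comm] using this
  have hdpos : 0 < d := by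
    rw [hd]; exact abs_pos.mpr hbasis
  -- gcd a b = 1
  have hg1 : Int.gcd a b = 1 := by
    by_contra hne
    have hgne : Int.gcd a b ≠ 0 := by
      intro h
      rw [Int.gcd_eq_zero_iff] at h
      rw [h.1, h.2] at hab1
      simp at hab1
      linarith
    set g : ℕ := Int.gcd a b with hg
    have hg2 : 2 ≤ g := by omega
    obtain ⟨a', ha'⟩ := (Int.gcd_dvd_left a b : (Int.gcd a b : ℤ) ∣ a)
    obtain ⟨b', hb'⟩ := (Int.gcd_dvd_right a b : (Int.gcd a b : ℤ) ∣ b)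
    have hgR : (0:ℝ) < (g:ℝ) := by positivity
    have hfst : (a':ℝ) * w₁.1 + (b':ℝ) * w₂.1 = dx / g := by
      field_simp
      have : ((a:ℝ)) = (g:ℝ) * (a':ℝ) := by exact_mod_cast congrArg Int.cast ha'
      have hb : ((b:ℝ)) = (g:ℝ) * (b':ℝ) := by exact_mod_cast congrArg Int.cast hb'
      rw [hab1, this, hb]; ring
    have hsnd : (a':ℝ) * w₁.2 + (b':ℝ) * w₂.2 = 0 := by
      have ha : ((a:ℝ)) = (g:ℝ) * (a':ℝ) := by exact_mod_cast congrArg Int.cast ha'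
      have hb : ((b:ℝ)) = (g:ℝ) * (b':ℝ) := by exact_mod_cast congrArg Int.cast hb'
      rw [ha, hb] at hab2
      have : (g:ℝ) * ((a':ℝ) * w₁.2 + (b':ℝ) * w₂.2) = 0 := by linarith [hab2]
      rcases mul_eq_zero.mp this with h | h
      · exact absurd h (ne_of_gt hgR)
      · exact h
    have hmem : (dx / g, (0:ℝ)) ∈ {x : ℝ × ℝ | ∃ m n : ℤ, x = m • w₁ + n • w₂} :=
      ⟨a', b', by
        apply Prod.ext <;> simp [zsmul_eq_mul]
        · rw [← hfst]
        · linarith [hsnd]⟩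
    have hle := hmin ⟨by positivity, hmem⟩
    have : dx * (g:ℝ) ≤ dx := by
      rw [le_div_iff₀ hgR] at hle; linarith
    have h2g : (2:ℝ) ≤ (g:ℝ) := by exact_mod_cast hg2
    nlinarith [mul_le_mul_of_nonneg_left h2g (le_of_lt hdxpos)]
  -- Bezout
  set p : ℤ := Int.gcdA a b with hp
  set q : ℤ := Int.gcdB a b with hq
  have hbez : a * p + b * q = 1 := by
    have := Int.gcd_eq_gcd_ab a b
    rw [hg1] at this
    exact_mod_cast this.symm
  have hbezR : (a:ℝ) * (p:ℝ) + (b:ℝ) * (q:ℝ) = 1 := by exact_mod_cast congrArg Int.cast hbez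
  set t : ℝ := (q:ℝ) * w₁.2 - (p:ℝ) * w₂.2 with ht
  have hw1 : w₁.2 = (b:ℝ) * t := by rw [ht]; linear_combination (-w₁.2) * hbezR + (p:ℝ) * hab2
  have hw2 : w₂.2 = -(a:ℝ) * t := by rw [ht]; linear_combination (-w₂.2) * hbezR + (q:ℝ) * hab2
  have hdet : w₁.1 * w₂.2 - w₁.2 * w₂.1 = -t * dx := by
    rw [hab1, hw1, hw2]; ring
  have hdt : d = |t| * dx := by
    rw [hd, hdet, abs_mul, abs_neg, abs_of_pos hdxpos]
  have htpos : 0 < |t| := by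
    by_contra h
    push_neg at h
    have : |t| = 0 := le_antisymm h (abs_nonneg t)
    rw [this] at hdt; linarith
  have hddx : d / dx = |t| := by rw [hdt]; field_simp
  -- main argument
  intro x hx x' hx' hmem
  obtain ⟨m, n, hmn⟩ := hmem
  simp only [Set.mem_prod, Set.mem_Ioo] at hx hx'
  have hv1 : x.1 - x'.1 = (m:ℝ) * w₁.1 + (n:ℝ) * w₂.1 := by
    have := congrArg Prod.fst hmn
    simpa [zsmul_eq_mul] using this
  have hv2 : x.2 - x'.2 = (m:ℝ) * w₁.2 + (n:ℝ) * w₂.2 := by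
    have := congrArg Prod.snd hmn
    simpa [zsmul_eq_mul] using this
  have hv2' : x.2 - x'.2 = ((m * b - n * a : ℤ) : ℝ) * t := by
    rw [hv2, hw1, hw2]; push_cast; ring
  have hk0 : (m * b - n * a : ℤ) = 0 := by
    have hbound : |x.2 - x'.2| < |t| := by
      rw [← hddx]
      rw [abs_lt]
      constructor <;> [linarith [hx.2.1, hx.2.2, hx'.2.1, hx'.2.2]; linarith [hx.2.1, hx.2.2, hx'.2.1, hx'.2.2]]
    rw [hv2', abs_mul] at hbound
    have : |((m * b - n * a : ℤ) : ℝ)| < 1 := by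
      by_contra h
      push_neg at h
      nlinarith
    have h1 : |(m * b - n * a : ℤ)| < 1 := by exact_mod_cast this
    have h2 := abs_lt.mp h1
    omega
  have hy : x.2 = x'.2 := by
    have : x.2 - x'.2 = 0 := by rw [hv2', hk0]; simp
    linarith
  have hsnd0 : (m:ℝ) * w₁.2 + (n:ℝ) * w₂.2 = 0 := by rw [← hv2, hy]; ring
  have hx1 : x.1 = x'.1 := by
    by_contra hne
    rcases lt_or_gt_of_ne hne with h | h
    · -- x'.1 > x.1, use -(x - x')
      have hmem' : (x'.1 - x.1, (0:ℝ)) ∈ {y : ℝ × ℝ | ∃ m n : ℤ, y = m • w₁ + n • w₂} :=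
        ⟨-m, -n, by
          apply Prod.ext <;> simp [zsmul_eq_mul]
          · linarith [hv1]
          · linarith [hsnd0]⟩
      have := hmin ⟨by linarith, hmem'⟩
      linarith [hx.1.2, hx'.1.1]
    · have hmem' : (x.1 - x'.1, (0:ℝ)) ∈ {y : ℝ × ℝ | ∃ m n : ℤ, y = m • w₁ + n • w₂} :=
        ⟨m, n, by
          apply Prod.ext <;> simp [zsmul_eq_mul]
          · linarith [hv1]
          · linarith [hsnd0]⟩
      have := hmin ⟨by linarith, hmem'⟩
      linarith [hx.1.1, hx'.1.2]
  exact Prod.ext hx1 hy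
end

section
/- Let Λ ⊆ R² be a lattice containing a nonzero point on the x-axis, with d_x > 0 the least positive number such that (d_x,0) ∈ Λ. Then the closed rectangle R = [0, d_x] × [0, d(Λ)/d_x] satisfies: the image of R under the quotient map π : R² → R²/Λ is all of R²/Λ (i.e., the translates R + λ for λ ∈ Λ cover R²). -/
/-- The Λ-translates of `[0,dₓ] × [0, d(Λ)/dₓ]` cover `ℝ²`. -/
theorem stmt3 (w₁ w₂ : ℝ × ℝ) (hbasis : w₁.1 * w₂.2 - w₁.2 * w₂.1 ≠ 0)
    (Λ : Set (ℝ × ℝ)) (hΛ : Λ = {x | ∃ m n : ℤ, x = m • w₁ + n • w₂})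
    (d : ℝ) (hd : d = |w₁.1 * w₂.2 - w₁.2 * w₂.1|)
    (dx : ℝ) (hdx : IsLeast {a : ℝ | 0 < a ∧ (a, (0:ℝ)) ∈ Λ} dx) :
    ∀ z : ℝ × ℝ, ∃ lam ∈ Λ,
      z - lam ∈ Set.Icc (0:ℝ) dx ×ˢ Set.Icc (0:ℝ) (d / dx) := by
  have hdx0 : 0 < dx := hdx.1.1
  have hmem : (dx, (0:ℝ)) ∈ Λ := hdx.1.2
  rw [hΛ] at hmem
  obtain ⟨p, q, hpq⟩ := hmem
  have hA : dx = (p : ℝ) * w₁.1 + (q : ℝ) * w₂.1 := by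
    have := congrArg Prod.fst hpq
    simpa [zsmul_eq_mul] using this
  have hB : (0 : ℝ) = (p : ℝ) * w₁.2 + (q : ℝ) * w₂.2 := by
    have := congrArg Prod.snd hpq
    simpa [zsmul_eq_mul] using this
  -- gcd p q = 1
  set g : ℕ := p.gcd q with hg
  have hpq0 : p ≠ 0 ∨ q ≠ 0 := by
    by_contra h
    push_neg at h
    rw [h.1, h.2] at hA
    simp at hA
    exact absurd hA (ne_of_gt hdx0)
  have hgpos : 0 < g := Int.gcd_pos_iff.mpr hpq0
  have hg1 : g = 1 := by
    by_contra hne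
    have hg2 : 2 ≤ g := by omega
    have hdvdp : (g : ℤ) ∣ p := Int.gcd_dvd_left p q
    have hdvdq : (g : ℤ) ∣ q := Int.gcd_dvd_right p q
    obtain ⟨p', hp'⟩ := hdvdp
    obtain ⟨q', hq'⟩ := hdvdq
    have hgR : (0:ℝ) < (g : ℝ) := by exact_mod_cast hgpos
    have hGA : (g:ℝ) * ((p':ℝ) * w₁.1 + (q':ℝ) * w₂.1) = dx := by
      rw [hp', hq'] at hA; push_cast at hA; linarith
    have hA' : dx / g = (p' : ℝ) * w₁.1 + (q' : ℝ) * w₂.1 := by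
      rw [div_eq_iff (ne_of_gt hgR)]
      linear_combination -hGA
    have hB' : (0 : ℝ) = (p' : ℝ) * w₁.2 + (q' : ℝ) * w₂.2 := by
      rw [hp', hq'] at hB
      push_cast at hB
      have : (g:ℝ) * ((p' : ℝ) * w₁.2 + (q' : ℝ) * w₂.2) = 0 := by linarith
      rcases mul_eq_zero.mp this with h | h
      · exact absurd h (ne_of_gt hgR)
      · linarith
    have hmemΛ : (dx / g, (0:ℝ)) ∈ Λ := by
      rw [hΛ]
      exact ⟨p', q', by
        apply Prod.ext <;> simp [zsmul_eq_mul] <;> [exact hA'; exact hB']⟩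
    have hle : dx ≤ dx / g := hdx.2 ⟨div_pos hdx0 hgR, hmemΛ⟩
    have : (g:ℝ) * dx ≤ dx := by
      rw [le_div_iff₀ hgR] at hle
      linarith
    have h2R : (2:ℝ) ≤ (g:ℝ) := by exact_mod_cast hg2
    nlinarith [hdx0]
  -- Bezout
  have hbez : (p : ℤ) * p.gcdA q + q * p.gcdB q = 1 := by
    have := Int.gcd_eq_gcd_ab p q
    rw [← hg, hg1] at this
    push_cast at this
    linarith [this]
  set a := p.gcdA q
  set b := p.gcdB q
  set D : ℝ := w₁.1 * w₂.2 - w₁.2 * w₂.1 with hD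
  set ε : ℤ := if 0 < D then 1 else -1 with hε
  set r : ℤ := -ε * b with hr
  set s : ℤ := ε * a with hs
  have hdet : ((p * s - q * r : ℤ) : ℝ) = (ε : ℝ) := by
    have : p * s - q * r = ε * (p * a + q * b) := by rw [hr, hs]; ring
    rw [this, hbez]
    push_cast
    ring
  have hεD : (ε : ℝ) * D = d := by
    rw [hd, hε]
    rcases lt_or_ge 0 D with h | h
    · rw [if_pos h, abs_of_pos h]; push_cast; ring
    · rw [if_neg (not_lt.mpr h), abs_of_nonpos h]; push_cast; ring
  have hd0 : 0 < d := by rw [hd]; exact abs_pos.mpr hbasis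
  set v1 : ℝ := (r : ℝ) * w₁.1 + (s : ℝ) * w₂.1 with hv1
  set vy : ℝ := (r : ℝ) * w₁.2 + (s : ℝ) * w₂.2 with hvy
  have hkey : dx * vy = d := by
    have h1 : dx * vy - 0 * v1 = ((p * s - q * r : ℤ) : ℝ) * D := by
      rw [hv1, hvy, hD]
      push_cast
      linear_combination ((r:ℝ) * w₁.2 + (s:ℝ) * w₂.2) * hA - ((r:ℝ) * w₁.1 + (s:ℝ) * w₂.1) * hB
    rw [hdet] at h1
    rw [← hεD]
    linarith
  have hvy0 : 0 < vy := by
    by_contra h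
    push_neg at h
    nlinarith
  have hvyd : vy = d / dx := by field_simp [ne_of_gt hdx0]; linarith [hkey]
  intro z
  set n : ℤ := ⌊z.2 / vy⌋ with hn
  set m : ℤ := ⌊(z.1 - (n : ℝ) * v1) / dx⌋ with hm
  refine ⟨(m * p + n * r) • w₁ + (m * q + n * s) • w₂, ?_, ?_⟩
  · rw [hΛ]; exact ⟨m * p + n * r, m * q + n * s, rfl⟩
  · have hx1 : ((m * p + n * r : ℤ) : ℝ) * w₁.1 + ((m * q + n * s : ℤ) : ℝ) * w₂.1
        = (m : ℝ) * dx + (n : ℝ) * v1 := by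
      rw [hA, hv1]; push_cast; ring
    have hx2 : ((m * p + n * r : ℤ) : ℝ) * w₁.2 + ((m * q + n * s : ℤ) : ℝ) * w₂.2
        = (n : ℝ) * vy := by
      have : (m : ℝ) * ((p:ℝ) * w₁.2 + (q:ℝ) * w₂.2) = 0 := by rw [← hB]; ring
      rw [hvy]; push_cast; push_cast at this; ring_nf; ring_nf at this; linarith
    constructor
    · simp only [Set.mem_Icc, Prod.fst_sub, Prod.fst_add, Prod.smul_fst, zsmul_eq_mul, Prod.fst_mul, Prod.fst_intCast]
      rw [hx1]
      have h1 : (m : ℝ) ≤ (z.1 - (n : ℝ) * v1) / dx := Int.floor_le _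
      have h2 : (z.1 - (n : ℝ) * v1) / dx < m + 1 := Int.lt_floor_add_one _
      rw [le_div_iff₀ hdx0] at h1
      rw [div_lt_iff₀ hdx0, add_mul, one_mul] at h2
      constructor <;> linarith
    · simp only [Set.mem_Icc, Prod.snd_sub, Prod.snd_add, Prod.smul_snd, zsmul_eq_mul, Prod.snd_mul, Prod.snd_intCast]
      rw [hx2, ← hvyd]
      have h1 : (n : ℝ) ≤ z.2 / vy := Int.floor_le _
      have h2 : z.2 / vy < n + 1 := Int.lt_floor_add_one _
      rw [le_div_iff₀ hvy0] at h1
      rw [div_lt_iff₀ hvy0, add_mul, one_mul] at h2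
      constructor <;> linarith
end

section
/- Let u = (p,q) and v = (r,s) be vectors in R² with p, q > 0 and r < 0 < s, and let Λ = Zu + Zv. Set R₁ = [r, p+r] × [0, s] and R₂ = [p+r, p] × [0, q]. Then the translates of R₁ and R₂ by elements of Λ cover R², and the Λ-translates of the open interiors of R₁ and R₂ are pairwise disjoint (including that the interior of each rectangle injects into R²/Λ). Consequently R₁ and R₂ induce a rectangular tiling of R²/Λ of total side length (p+q) + (−r+s) = ‖u‖₁ + ‖v‖₁. -/
/-- Injectivity auxiliary: a lexicographically positive lattice vector cannot
connect two points of the open tile. -/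
lemma stmt4_auxInj (p q r s : ℝ) (hp : 0 < p) (hq : 0 < q) (hr : r < 0) (hs : 0 < s)
    (m n : ℤ) (x1 x2 y1 y2 : ℝ)
    (hx : ((r < x1 ∧ x1 < p + r) ∧ 0 < x2 ∧ x2 < s) ∨
          ((p + r < x1 ∧ x1 < p) ∧ 0 < x2 ∧ x2 < q))
    (hy : ((r < y1 ∧ y1 < p + r) ∧ 0 < y2 ∧ y2 < s) ∨
          ((p + r < y1 ∧ y1 < p) ∧ 0 < y2 ∧ y2 < q))
    (h1 : x1 - y1 = m * p + n * r) (h2 : x2 - y2 = m * q + n * s)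
    (hlex : 0 < m ∨ (m = 0 ∧ 0 < n)) : False := by
  have hx1u : x1 < p := by rcases hx with ⟨⟨_, h⟩, _⟩ | ⟨⟨_, h⟩, _⟩ <;> linarith
  have hx1l : r < x1 := by rcases hx with ⟨⟨h, _⟩, _⟩ | ⟨⟨h, _⟩, _⟩ <;> linarith
  have hx2l : (0:ℝ) < x2 := by rcases hx with ⟨_, h, _⟩ | ⟨_, h, _⟩ <;> linarith
  have hx2u : x2 < q + s := by rcases hx with ⟨_, _, h⟩ | ⟨_, _, h⟩ <;> linarith
  have hy1u : y1 < p := by rcases hy with ⟨⟨_, h⟩, _⟩ | ⟨⟨_, h⟩, _⟩ <;> linarith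
  have hy1l : r < y1 := by rcases hy with ⟨⟨h, _⟩, _⟩ | ⟨⟨h, _⟩, _⟩ <;> linarith
  have hy2l : (0:ℝ) < y2 := by rcases hy with ⟨_, h, _⟩ | ⟨_, h, _⟩ <;> linarith
  rcases hlex with hm | ⟨hm, hn⟩
  · have hm1 : (1:ℝ) ≤ (m:ℝ) := by exact_mod_cast hm
    have hmp : p ≤ (m:ℝ) * p := le_mul_of_one_le_left hp.le hm1
    have hmq : q ≤ (m:ℝ) * q := le_mul_of_one_le_left hq.le hm1
    rcases lt_trichotomy n 0 with hn | hn | hn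
    · have hn1 : (n:ℝ) ≤ -1 := by exact_mod_cast (by omega : n ≤ -1)
      have hnr : -r ≤ (n:ℝ) * r := by nlinarith
      linarith
    · subst hn
      norm_num at h1 h2
      have hx1 : p + r < x1 := by linarith
      have hx2q : x2 < q := by
        rcases hx with ⟨⟨_, h⟩, _⟩ | ⟨_, _, h⟩
        · linarith
        · linarith
      linarith
    · have hn1 : (1:ℝ) ≤ (n:ℝ) := by exact_mod_cast hn
      have hns : s ≤ (n:ℝ) * s := le_mul_of_one_le_left hs.le hn1
      linarith
  · subst hm
    norm_num at h1 h2
    have hn1 : (1:ℝ) ≤ (n:ℝ) := by exact_mod_cast hn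
    have hnr : (n:ℝ) * r ≤ r := by nlinarith
    have hns : s ≤ (n:ℝ) * s := le_mul_of_one_le_left hs.le hn1
    have hx1s : x1 < p + r := by linarith
    have hx2s : x2 < s := by
      rcases hx with ⟨_, _, h⟩ | ⟨⟨h, _⟩, _⟩
      · linarith
      · linarith
    linarith

/-- Covering auxiliary: every point of the plane is a lattice translate of a
point of `R₁ ∪ R₂`. -/
lemma stmt4_cover (p q r s : ℝ) (hp : 0 < p) (hq : 0 < q) (hr : r < 0) (hs : 0 < s)
    (zx zy : ℝ) :
    ∃ m n : ℤ,
      (r ≤ zx - ((m:ℝ) * p + (n:ℝ) * r) ∧ zx - ((m:ℝ) * p + (n:ℝ) * r) ≤ p + r ∧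
        0 ≤ zy - ((m:ℝ) * q + (n:ℝ) * s) ∧ zy - ((m:ℝ) * q + (n:ℝ) * s) ≤ s) ∨
      (p + r ≤ zx - ((m:ℝ) * p + (n:ℝ) * r) ∧ zx - ((m:ℝ) * p + (n:ℝ) * r) ≤ p ∧
        0 ≤ zy - ((m:ℝ) * q + (n:ℝ) * s) ∧ zy - ((m:ℝ) * q + (n:ℝ) * s) ≤ q) := by
  have hD : 0 < p * s - r * q := by nlinarith
  set M : ℝ → ℤ := fun t => ⌊(t - r) / p⌋ with hM
  have hMl : ∀ t : ℝ, r + (M t : ℝ) * p ≤ t := by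
    intro t
    have h := Int.floor_le ((t - r) / p)
    rw [le_div_iff₀ hp] at h
    simpa [hM] using by linarith [h] 
  have hMu : ∀ t : ℝ, t < r + ((M t : ℝ) + 1) * p := by
    intro t
    have h := Int.lt_floor_add_one ((t - r) / p)
    rw [div_lt_iff₀ hp] at h
    linarith
  set G : ℤ → ℝ := fun n => zy - (n:ℝ) * s - (M (zx - (n:ℝ) * r) : ℝ) * q with hG
  -- the set {n | 0 ≤ G n} is nonempty
  have hinh : ∃ n : ℤ, 0 ≤ G n := by
    refine ⟨⌊(p * zy - q * (zx - r)) / (p * s - r * q)⌋, ?_⟩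
    set n0 : ℤ := ⌊(p * zy - q * (zx - r)) / (p * s - r * q)⌋ with hn0
    have h := Int.floor_le ((p * zy - q * (zx - r)) / (p * s - r * q))
    rw [le_div_iff₀ hD] at h
    have hA := hMl (zx - (n0:ℝ) * r)
    have hAq : (M (zx - (n0:ℝ) * r) : ℝ) * p * q ≤ (zx - (n0:ℝ) * r - r) * q := by nlinarith
    have key : 0 ≤ p * G n0 := by
      simp only [hG]
      nlinarith
    exact nonneg_of_mul_nonneg_right key hp
  -- the set {n | 0 ≤ G n} is bounded above
  have hbdd : ∃ b : ℤ, ∀ n : ℤ, 0 ≤ G n → n ≤ b := by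
    refine ⟨⌊(p * (zy + q) - q * (zx - r)) / (p * s - r * q)⌋, ?_⟩
    intro n hn
    set c : ℝ := (p * (zy + q) - q * (zx - r)) / (p * s - r * q) with hc
    have hB := hMu (zx - (n:ℝ) * r)
    have hBq : (zx - (n:ℝ) * r - r - p) * q < (M (zx - (n:ℝ) * r) : ℝ) * p * q := by nlinarith
    have hGn : (M (zx - (n:ℝ) * r) : ℝ) * q * p ≤ (zy - (n:ℝ) * s) * p := by
      simp only [hG] at hn; nlinarith
    have hlt : (n:ℝ) * (p * s - r * q) < p * (zy + q) - q * (zx - r) := by nlinarith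
    have hlt2 : (n:ℝ) < c := by rw [hc, lt_div_iff₀ hD]; linarith
    have hlt3 : (n:ℝ) < (⌊c⌋ : ℝ) + 1 := lt_of_lt_of_le hlt2 (Int.lt_floor_add_one c).le
    exact_mod_cast Int.lt_add_one_iff.mp (by exact_mod_cast hlt3)
  obtain ⟨n', hn'G, hn'max⟩ := Int.exists_greatest_of_bdd hbdd hinh
  have hGsucc : G (n' + 1) < 0 := by
    by_contra h
    push_neg at h
    have := hn'max (n' + 1) h
    omega
  by_cases hc : G n' ≤ s
  · -- land in R₁
    refine ⟨M (zx - (n':ℝ) * r), n', Or.inl ?_⟩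
    have hA := hMl (zx - (n':ℝ) * r)
    have hB := hMu (zx - (n':ℝ) * r)
    simp only [hG] at hn'G hc
    refine ⟨by linarith, by linarith, by linarith, by linarith⟩
  · -- land in R₂
    push_neg at hc
    set m0 : ℤ := M (zx - (n':ℝ) * r) with hm0d
    set m1 : ℤ := M (zx - ((n':ℝ) + 1) * r) with hm1d
    set Y : ℝ := zy - ((n':ℝ) + 1) * s with hY
    set ms : ℤ := ⌊Y / q⌋ with hms
    have h0 : (m0:ℝ) * q < Y := by
      simp only [hG] at hc; simp only [hY]; linarith
    have h1 : Y < (m1:ℝ) * q := by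
      simp only [hG] at hGsucc
      have : ((n' + 1 : ℤ) : ℝ) = (n':ℝ) + 1 := by push_cast; ring
      rw [this] at hGsucc
      simp only [hY]; linarith
    have hm0le : m0 ≤ ms := by
      rw [hms, Int.le_floor, le_div_iff₀ hq]; linarith
    have hmslt : ms < m1 := Int.floor_lt.mpr (by rw [div_lt_iff₀ hq]; exact h1)
    have hYl : (ms:ℝ) * q ≤ Y := by
      have := Int.floor_le (Y / q); rw [le_div_iff₀ hq] at this; exact this
    have hYu : Y < ((ms:ℝ) + 1) * q := by
      have := Int.lt_floor_add_one (Y / q); rw [div_lt_iff₀ hq] at this; linarith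
    have hm0le' : (m0:ℝ) ≤ (ms:ℝ) := by exact_mod_cast hm0le
    have hmslt' : (ms:ℝ) + 1 ≤ (m1:ℝ) := by exact_mod_cast hmslt
    have hA := hMl (zx - ((n':ℝ) + 1) * r)
    have hB := hMu (zx - (n':ℝ) * r)
    refine ⟨ms, n' + 1, Or.inr ?_⟩
    have hcast : ((n' + 1 : ℤ) : ℝ) = (n':ℝ) + 1 := by push_cast; ring
    rw [hcast]
    refine ⟨?_, ?_, ?_, ?_⟩
    · nlinarith
    · nlinarith
    · simp only [hY] at hYl; linarith
    · simp only [hY] at hYu; linarith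

/-- The two rectangles `R₁ = [r,p+r]×[0,s]` and
`R₂ = [p+r,p]×[0,q]` tile the flat torus `ℝ²/Λ`, with total side length
`(p+q) + (−r+s) = ‖u‖₁ + ‖v‖₁`. -/
theorem stmt4 (p q r s : ℝ) (hp : 0 < p) (hq : 0 < q) (hr : r < 0) (hs : 0 < s)
    (Λ : Set (ℝ × ℝ))
    (hΛ : Λ = {x | ∃ m n : ℤ, x = m • ((p, q) : ℝ × ℝ) + n • ((r, s) : ℝ × ℝ)})
    (R₁ R₂ : Set (ℝ × ℝ))
    (hR₁ : R₁ = Set.Icc r (p + r) ×ˢ Set.Icc (0:ℝ) s)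
    (hR₂ : R₂ = Set.Icc (p + r) p ×ˢ Set.Icc (0:ℝ) q) :
    (∀ z : ℝ × ℝ, ∃ lam ∈ Λ, z - lam ∈ R₁ ∪ R₂) ∧
    (∀ x ∈ (Set.Ioo r (p + r) ×ˢ Set.Ioo (0:ℝ) s) ∪
           (Set.Ioo (p + r) p ×ˢ Set.Ioo (0:ℝ) q),
      ∀ y ∈ (Set.Ioo r (p + r) ×ˢ Set.Ioo (0:ℝ) s) ∪
            (Set.Ioo (p + r) p ×ˢ Set.Ioo (0:ℝ) q),
        x - y ∈ Λ → x = y) ∧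
    ((p + r - r) + (s - 0)) + ((p - (p + r)) + (q - 0))
      = (|p| + |q|) + (|r| + |s|) := by
  subst hΛ hR₁ hR₂
  refine ⟨?_, ?_, ?_⟩
  · -- covering
    rintro ⟨zx, zy⟩
    obtain ⟨m, n, hmn⟩ := stmt4_cover p q r s hp hq hr hs zx zy
    refine ⟨m • ((p, q) : ℝ × ℝ) + n • ((r, s) : ℝ × ℝ), ⟨m, n, rfl⟩, ?_⟩
    have hsub : ((zx, zy) : ℝ × ℝ) - (m • ((p, q) : ℝ × ℝ) + n • ((r, s) : ℝ × ℝ))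
        = (zx - ((m:ℝ) * p + (n:ℝ) * r), zy - ((m:ℝ) * q + (n:ℝ) * s)) := by
      simp [Prod.ext_iff, zsmul_eq_mul]
    rw [hsub]
    rcases hmn with h | h
    · exact Or.inl (Set.mk_mem_prod (Set.mem_Icc.mpr ⟨h.1, h.2.1⟩)
        (Set.mem_Icc.mpr ⟨h.2.2.1, h.2.2.2⟩))
    · exact Or.inr (Set.mk_mem_prod (Set.mem_Icc.mpr ⟨h.1, h.2.1⟩)
        (Set.mem_Icc.mpr ⟨h.2.2.1, h.2.2.2⟩))
  · -- injectivity
    intro x hx y hy hxy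
    obtain ⟨m, n, hmn⟩ := hxy
    have e1 : x.1 - y.1 = (m:ℝ) * p + (n:ℝ) * r := by
      have := congrArg Prod.fst hmn
      simpa [zsmul_eq_mul] using this
    have e2 : x.2 - y.2 = (m:ℝ) * q + (n:ℝ) * s := by
      have := congrArg Prod.snd hmn
      simpa [zsmul_eq_mul] using this
    simp only [Set.mem_union, Set.mem_prod, Set.mem_Ioo] at hx hy
    have H1 := stmt4_auxInj p q r s hp hq hr hs m n x.1 x.2 y.1 y.2 hx hy e1 e2
    have H2 := stmt4_auxInj p q r s hp hq hr hs (-m) (-n) y.1 y.2 x.1 x.2 hy hx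
      (by push_cast; linarith) (by push_cast; linarith)
    have hmn0 : m = 0 ∧ n = 0 := by
      by_contra hcon
      have hlex : (0 < m ∨ (m = 0 ∧ 0 < n)) ∨ (0 < -m ∨ (-m = 0 ∧ 0 < -n)) := by omega
      rcases hlex with h | h
      · exact (H1 h).elim
      · exact (H2 h).elim
    obtain ⟨hm0, hn0⟩ := hmn0
    subst hm0 hn0
    simp only [zero_smul, add_zero] at hmn
    exact sub_eq_zero.mp (by simpa using hmn)
  · rw [abs_of_pos hp, abs_of_pos hq, abs_of_neg hr, abs_of_pos hs]
    ring
end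

section
/- Let Λ ⊆ R² be a lattice and suppose u = (p,q) ∈ Λ with pq ≥ 0 minimizes the ℓ¹-norm over nonzero lattice points with xy ≥ 0, and v = (r,s) ∈ Λ with rs < 0 minimizes the ℓ¹-norm over lattice points with xy < 0. If p = 0, then |q| = d_y and |r| = d(Λ)/d_y, where d_y is the least positive number with (0,d_y) ∈ Λ; consequently ‖u‖₁ + ‖v‖₁ > d_y + d(Λ)/d_y. -/
private lemma lat_step (Λ : Set (ℝ × ℝ))
    (hsub : ∀ a b : ℝ × ℝ, a ∈ Λ → b ∈ Λ → a - b ∈ Λ)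
    (hzsmul : ∀ (n : ℤ) (a : ℝ × ℝ), a ∈ Λ → n • a ∈ Λ)
    (dy r₀ s₀ : ℝ) (hdy0 : 0 < dy)
    (hu : ((0:ℝ), dy) ∈ Λ)
    (hmin1 : ∀ w ∈ Λ, w ≠ 0 → w.1 * w.2 ≥ 0 → dy ≤ |w.1| + |w.2|)
    (hmin2 : ∀ w ∈ Λ, w.1 * w.2 < 0 → r₀ - s₀ ≤ |w.1| + |w.2|)
    (x y : ℝ) (hw : (x, y) ∈ Λ) (hx0 : 0 < x) :
    r₀ - s₀ ≤ 2 * x := by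
  set k : ℤ := ⌊y / dy⌋ with hk
  set y₁ : ℝ := y - k * dy with hy₁
  have hfl : (k:ℝ) ≤ y / dy := Int.floor_le _
  have hfu : y / dy < k + 1 := Int.lt_floor_add_one _
  have h1 : (k:ℝ) * dy ≤ y := by
    have := (div_le_iff₀ hdy0).mp (le_refl (y/dy))
    calc (k:ℝ) * dy ≤ (y/dy) * dy := by nlinarith
      _ = y := by field_simp
  have h2 : y < ((k:ℝ) + 1) * dy := by
    rw [div_lt_iff₀ hdy0] at hfu; linarith
  have hy₁0 : 0 ≤ y₁ := by simp [hy₁]; linarith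
  have hy₁1 : y₁ < dy := by simp [hy₁]; linarith
  have hm1 : ((x, y₁) : ℝ × ℝ) ∈ Λ := by
    have := hsub (x, y) (k • ((0:ℝ), dy)) hw (hzsmul k _ hu)
    have he : ((x,y) : ℝ × ℝ) - k • ((0:ℝ), dy) = (x, y₁) := by
      simp [Prod.ext_iff, hy₁]
    rwa [he] at this
  have hA := hmin1 (x, y₁) hm1 (by simp [Prod.ext_iff]; intro h; exact absurd h (ne_of_gt hx0)) (by simp; exact mul_nonneg hx0.le hy₁0)
  have hm2 : ((x, y₁ - dy) : ℝ × ℝ) ∈ Λ := by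
    have := hsub (x, y₁) ((0:ℝ), dy) hm1 hu
    have he : ((x,y₁) : ℝ × ℝ) - ((0:ℝ), dy) = (x, y₁ - dy) := by
      simp [Prod.ext_iff]
    rwa [he] at this
  have hB := hmin2 (x, y₁ - dy) hm2 (by simp; exact mul_neg_of_pos_of_neg hx0 (by linarith))
  rw [abs_of_pos hx0, abs_of_nonneg hy₁0] at hA
  rw [abs_of_pos hx0, abs_of_neg (by linarith : y₁ - dy < 0)] at hB
  linarith

/-- If the ℓ¹-minimizer `u = (p,q)` of `Q₁` has `p = 0`, then
`|q| = d_y`, `|r| = d(Λ)/d_y`, and `‖u‖₁ + ‖v‖₁ > d_y + d(Λ)/d_y`. -/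
theorem stmt5 (w₁ w₂ : ℝ × ℝ) (hbasis : w₁.1 * w₂.2 - w₁.2 * w₂.1 ≠ 0)
    (Λ : Set (ℝ × ℝ)) (hΛ : Λ = {x | ∃ m n : ℤ, x = m • w₁ + n • w₂})
    (d : ℝ) (hd : d = |w₁.1 * w₂.2 - w₁.2 * w₂.1|)
    (p q r s : ℝ)
    (huΛ : ((p, q) : ℝ × ℝ) ∈ Λ) (hu0 : ((p, q) : ℝ × ℝ) ≠ 0) (huQ : p * q ≥ 0)
    (humin : ∀ w ∈ Λ, w ≠ 0 → w.1 * w.2 ≥ 0 → |p| + |q| ≤ |w.1| + |w.2|)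
    (hvΛ : ((r, s) : ℝ × ℝ) ∈ Λ) (hvQ : r * s < 0)
    (hvmin : ∀ w ∈ Λ, w.1 * w.2 < 0 → |r| + |s| ≤ |w.1| + |w.2|)
    (hp : p = 0)
    (dy : ℝ) (hdy : IsLeast {b : ℝ | 0 < b ∧ ((0:ℝ), b) ∈ Λ} dy) :
    |q| = dy ∧ |r| = d / dy ∧ (|p| + |q|) + (|r| + |s|) > dy + d / dy := by
  have hmemw : ∀ z : ℝ × ℝ, z ∈ Λ ↔ ∃ m n : ℤ, z = m • w₁ + n • w₂ := by
    intro z; rw [hΛ]; exact Iff.rfl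
  have hsub : ∀ a b : ℝ × ℝ, a ∈ Λ → b ∈ Λ → a - b ∈ Λ := by
    intro a b ha hb
    obtain ⟨ma, na, ha⟩ := (hmemw a).mp ha
    obtain ⟨mb, nb, hb⟩ := (hmemw b).mp hb
    exact (hmemw _).mpr ⟨ma - mb, na - nb, by rw [ha, hb, sub_smul, sub_smul]; abel⟩
  have hzsmul : ∀ (n : ℤ) (a : ℝ × ℝ), a ∈ Λ → n • a ∈ Λ := by
    intro n a ha
    obtain ⟨ma, na, ha⟩ := (hmemw a).mp ha
    exact (hmemw _).mpr ⟨n * ma, n * na, by rw [ha, smul_add, smul_smul, smul_smul]⟩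
  have hzero : ((0,0) : ℝ × ℝ) ∈ Λ := (hmemw _).mpr ⟨0, 0, by simp⟩
  have hneg : ∀ a : ℝ × ℝ, a ∈ Λ → -a ∈ Λ := by
    intro a ha; have := hsub (0,0) a hzero ha; rw [Prod.mk_zero_zero, zero_sub] at this; exact this
  obtain ⟨⟨hdy0, hdyΛ⟩, hdylb'⟩ := hdy
  have hlb : ∀ b : ℝ, 0 < b → ((0:ℝ), b) ∈ Λ → dy ≤ b := fun b h1 h2 => hdylb' ⟨h1, h2⟩
  have hq0 : q ≠ 0 := by
    intro h; exact hu0 (by simp [Prod.ext_iff, hp, h])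
  -- |q| = dy
  have habsq : |q| = dy := by
    have hle : |q| ≤ dy := by
      have := humin (0, dy) hdyΛ (by simp [Prod.ext_iff]; exact ne_of_gt hdy0)
        (by simp)
      rw [hp] at this; simp [abs_of_pos hdy0] at this; linarith
    have hge : dy ≤ |q| := by
      rcases lt_or_gt_of_ne hq0 with h | h
      · have : ((0:ℝ), |q|) ∈ Λ := by
          have := hneg (p, q) huΛ
          simpa [Prod.ext_iff, hp, abs_of_neg h] using this
        exact hlb _ (abs_pos.mpr hq0) this
      · have : ((0:ℝ), |q|) ∈ Λ := by
          rw [abs_of_pos h, ← hp]; exact huΛ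
        exact hlb _ (abs_pos.mpr hq0) this
    linarith
  have hmin1 : ∀ w ∈ Λ, w ≠ 0 → w.1 * w.2 ≥ 0 → dy ≤ |w.1| + |w.2| := by
    intro w hw h0 hq'
    have := humin w hw h0 hq'
    rwa [hp, abs_zero, zero_add, habsq] at this
  -- normalize v
  have hrne : r ≠ 0 := fun h => by simp [h] at hvQ
  have hsne : s ≠ 0 := fun h => by simp [h] at hvQ
  set r₀ : ℝ := |r| with hr₀
  set s₀ : ℝ := -|s| with hs₀
  have hr0 : 0 < r₀ := abs_pos.mpr hrne
  have hs0 : s₀ < 0 := by simp [hs₀]; exact hsne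
  have hv₀ : ((r₀, s₀) : ℝ × ℝ) ∈ Λ := by
    rcases mul_neg_iff.mp hvQ with ⟨hr, hs⟩ | ⟨hr, hs⟩
    · have : (r₀, s₀) = ((r, s) : ℝ × ℝ) := by
        simp [Prod.ext_iff, hr₀, hs₀, abs_of_pos hr, abs_of_neg hs]
      rw [this]; exact hvΛ
    · have h2 : (r₀, s₀) = -((r, s) : ℝ × ℝ) := by
        simp [Prod.ext_iff, hr₀, hs₀, abs_of_neg hr, abs_of_pos hs]
      rw [h2]; exact hneg _ hvΛ
  have hmin2 : ∀ w ∈ Λ, w.1 * w.2 < 0 → r₀ - s₀ ≤ |w.1| + |w.2| := by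
    intro w hw h
    have := hvmin w hw h
    have he : r₀ - s₀ = |r| + |s| := by simp [hr₀, hs₀]
    linarith
  -- no lattice point with x-coordinate strictly between 0 and r₀
  have hnone : ∀ x y : ℝ, (x, y) ∈ Λ → 0 < x → x < r₀ → False := by
    intro x y hxy h1 h2
    have A := lat_step Λ hsub hzsmul dy r₀ s₀ hdy0 hdyΛ hmin1 hmin2 x y hxy h1
    have hvw : ((r₀ - x, s₀ - y) : ℝ × ℝ) ∈ Λ := by
      have := hsub (r₀, s₀) (x, y) hv₀ hxy
      simpa [Prod.mk_sub_mk] using this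
    have B := lat_step Λ hsub hzsmul dy r₀ s₀ hdy0 hdyΛ hmin1 hmin2 (r₀ - x) (s₀ - y) hvw (by linarith)
    linarith
  -- x-coordinates are multiples of r₀
  have hxmult : ∀ x y : ℝ, (x, y) ∈ Λ → ∃ n : ℤ, x = n * r₀ := by
    intro x y h
    set n : ℤ := ⌊x / r₀⌋ with hn
    have hfl : (n:ℝ) ≤ x / r₀ := Int.floor_le _
    have hfu : x / r₀ < n + 1 := Int.lt_floor_add_one _
    have h1 : (n:ℝ) * r₀ ≤ x := by
      calc (n:ℝ) * r₀ ≤ (x/r₀) * r₀ := by nlinarith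
        _ = x := by field_simp
    have h2 : x < ((n:ℝ) + 1) * r₀ := by rw [div_lt_iff₀ hr0] at hfu; linarith
    have hm : ((x - n * r₀, y - n * s₀) : ℝ × ℝ) ∈ Λ := by
      have := hsub (x, y) (n • ((r₀ : ℝ), s₀)) h (hzsmul n _ hv₀)
      have he : ((x, y) : ℝ × ℝ) - n • ((r₀ : ℝ), s₀) = (x - n * r₀, y - n * s₀) := by
        simp [Prod.ext_iff]
      rwa [he] at this
    by_cases hc : x - n * r₀ = 0
    · exact ⟨n, by linarith⟩
    · exact absurd (hnone _ _ hm (lt_of_le_of_ne (by linarith) (Ne.symm hc)) (by linarith)) (by simp)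
  -- y-axis points are multiples of dy
  have hymult : ∀ t : ℝ, ((0:ℝ), t) ∈ Λ → ∃ m : ℤ, t = m * dy := by
    intro t h
    set m : ℤ := ⌊t / dy⌋ with hm'
    have hfl : (m:ℝ) ≤ t / dy := Int.floor_le _
    have hfu : t / dy < m + 1 := Int.lt_floor_add_one _
    have h1 : (m:ℝ) * dy ≤ t := by
      calc (m:ℝ) * dy ≤ (t/dy) * dy := by nlinarith
        _ = t := by field_simp
    have h2 : t < ((m:ℝ) + 1) * dy := by rw [div_lt_iff₀ hdy0] at hfu; linarith
    have hmm : ((0, t - m * dy) : ℝ × ℝ) ∈ Λ := by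
      have := hsub ((0:ℝ), t) (m • ((0:ℝ), dy)) h (hzsmul m _ hdyΛ)
      have he : (((0:ℝ), t) : ℝ × ℝ) - m • ((0:ℝ), dy) = (0, t - m * dy) := by
        simp [Prod.ext_iff]
      rwa [he] at this
    by_cases hc : t - m * dy = 0
    · exact ⟨m, by linarith⟩
    · have hpos : 0 < t - m * dy := lt_of_le_of_ne (by linarith) (Ne.symm hc)
      have := hlb _ hpos hmm
      linarith
  -- decompose a lattice point over (r₀,s₀) and (0,dy)
  have hdecomp : ∀ z : ℝ × ℝ, z ∈ Λ → ∃ n m : ℤ, z.1 = n * r₀ ∧ z.2 = n * s₀ + m * dy := by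
    intro z hz
    obtain ⟨n, hn⟩ := hxmult z.1 z.2 (by rwa [Prod.mk.eta])
    have hmm : ((0, z.2 - n * s₀) : ℝ × ℝ) ∈ Λ := by
      have := hsub z (n • ((r₀ : ℝ), s₀)) hz (hzsmul n _ hv₀)
      have he : z - n • ((r₀ : ℝ), s₀) = ((0 : ℝ), z.2 - n * s₀) := by
        simp [Prod.ext_iff]; rw [hn]; ring
      rwa [he] at this
    obtain ⟨m, hm⟩ := hymult _ hmm
    exact ⟨n, m, hn, by linarith⟩
  have hw₁Λ : w₁ ∈ Λ := (hmemw _).mpr ⟨1, 0, by simp⟩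
  have hw₂Λ : w₂ ∈ Λ := (hmemw _).mpr ⟨0, 1, by simp⟩
  obtain ⟨n₁, m₁, e11, e12⟩ := hdecomp w₁ hw₁Λ
  obtain ⟨n₂, m₂, e21, e22⟩ := hdecomp w₂ hw₂Λ
  set K : ℤ := n₁ * m₂ - n₂ * m₁ with hK
  have hD : w₁.1 * w₂.2 - w₁.2 * w₂.1 = (K : ℝ) * (r₀ * dy) := by
    rw [e11, e12, e21, e22]; push_cast [hK]; ring
  -- reverse direction: (0,dy) and (r₀,s₀) in terms of w₁, w₂
  obtain ⟨a, b, hab⟩ := (hmemw ((0:ℝ), dy)).mp hdyΛ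
  obtain ⟨c, e, hce⟩ := (hmemw ((r₀:ℝ), s₀)).mp hv₀
  have hab1 : (0:ℝ) = a * w₁.1 + b * w₂.1 := by
    have := congrArg Prod.fst hab; simpa [zsmul_eq_mul] using this
  have hab2 : dy = a * w₁.2 + b * w₂.2 := by
    have := congrArg Prod.snd hab; simpa [zsmul_eq_mul] using this
  have hce1 : r₀ = c * w₁.1 + e * w₂.1 := by
    have := congrArg Prod.fst hce; simpa [zsmul_eq_mul] using this
  have hce2 : s₀ = c * w₁.2 + e * w₂.2 := by
    have := congrArg Prod.snd hce; simpa [zsmul_eq_mul] using this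
  set L : ℤ := a * e - b * c with hL
  have hDet2 : -(dy * r₀) = (L : ℝ) * (w₁.1 * w₂.2 - w₁.2 * w₂.1) := by
    have : (0:ℝ) * s₀ - dy * r₀ = (L:ℝ) * (w₁.1 * w₂.2 - w₁.2 * w₂.1) := by
      rw [hab1, hab2, hce1, hce2]; push_cast [hL]; ring
    linarith [this]
  have hrdy : (0:ℝ) < r₀ * dy := mul_pos hr0 hdy0
  have hLK : (L : ℝ) * (K : ℝ) = -1 := by
    rw [hD] at hDet2
    have : -(dy * r₀) = (L:ℝ) * (K:ℝ) * (r₀ * dy) := by rw [hDet2]; ring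
    have h2 := mul_right_cancel₀ (ne_of_gt hrdy) (by linarith : ((L:ℝ) * (K:ℝ)) * (r₀*dy) = (-1) * (r₀*dy))
    exact h2
  have hLKz : L * K = -1 := by exact_mod_cast hLK
  have hKunit : K = 1 ∨ K = -1 := by
    have : IsUnit K := IsUnit.of_mul_eq_one (a := K) (-L) (by rw [mul_neg, mul_comm, hLKz, neg_neg])
    exact Int.isUnit_iff.mp this
  have hdval : d = r₀ * dy := by
    rw [hd, hD]
    rcases hKunit with h | h
    · rw [h]; push_cast; rw [one_mul, abs_of_pos hrdy]
    · rw [h]; push_cast; rw [neg_one_mul, abs_neg, abs_of_pos hrdy]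
  have hrd : |r| = d / dy := by
    rw [hdval]; field_simp; rfl
  refine ⟨habsq, hrd, ?_⟩
  have hsabs : 0 < |s| := abs_pos.mpr hsne
  rw [hp, abs_zero, habsq, ← hrd]
  linarith
end

section
/- With the setup of the previous statement (A,B,C',D' on a horizontal segment; C,D,A',B' on a vertical segment; differences in Λ; wᵢ as defined), if u minimizes ‖·‖₁ over nonzero lattice points in Q₁ = {xy ≥ 0} and v minimizes ‖·‖₁ over lattice points in Q₂ = {xy < 0}, and additionally each wᵢ is nonzero and w₂, w₄ ∈ Q₂, then |AB| + |CD| ≥ ‖u‖₁ + ‖v‖₁. -/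
lemma lat_neg_sub {w₁' w₂' x y : ℝ × ℝ} (hx : ∃ m n : ℤ, x = m • w₁' + n • w₂')
    (hy : ∃ m n : ℤ, y = m • w₁' + n • w₂') :
    ∃ m n : ℤ, -x - y = m • w₁' + n • w₂' := by
  obtain ⟨m, n, rfl⟩ := hx
  obtain ⟨m', n', rfl⟩ := hy
  exact ⟨-m - m', -n - n', by simp [sub_smul, neg_smul]; abel⟩

/-- In the cross configuration, if `u`, `v` are ℓ¹-minimizers in
`Q₁ \ {0}` and `Q₂` respectively, each `wᵢ` is nonzero and `w₂, w₄ ∈ Q₂`, then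
`|AB| + |CD| ≥ ‖u‖₁ + ‖v‖₁`. -/
theorem stmt7 (w₁' w₂' : ℝ × ℝ) (hbasis : w₁'.1 * w₂'.2 - w₁'.2 * w₂'.1 ≠ 0)
    (Λ : Set (ℝ × ℝ)) (hΛ : Λ = {x | ∃ m n : ℤ, x = m • w₁' + n • w₂'})
    (h t a₁ b₁ c₁ d₁ c₂ d₂ a₂ b₂ : ℝ)
    (A B C' D' : ℝ × ℝ) (C D A' B' : ℝ × ℝ)
    (hA : A = (a₁, h)) (hB : B = (b₁, h)) (hC' : C' = (c₁, h)) (hD' : D' = (d₁, h))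
    (hC : C = (t, c₂)) (hD : D = (t, d₂)) (hA' : A' = (t, a₂)) (hB' : B' = (t, b₂))
    (hc₁ : a₁ ≤ c₁ ∧ c₁ ≤ b₁) (hd₁ : a₁ ≤ d₁ ∧ d₁ ≤ b₁)
    (ha₂ : c₂ ≤ a₂ ∧ a₂ ≤ d₂) (hb₂ : c₂ ≤ b₂ ∧ b₂ ≤ d₂)
    (hAA' : A - A' ∈ Λ) (hBB' : B - B' ∈ Λ) (hCC' : C - C' ∈ Λ) (hDD' : D - D' ∈ Λ)
    (w₁ w₂ w₃ w₄ : ℝ × ℝ)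
    (hw₁ : w₁ = (C' - A) + (A' - C)) (hw₂ : w₂ = (C' - B) + (B' - C))
    (hw₃ : w₃ = (D' - B) + (B' - D)) (hw₄ : w₄ = (D' - A) + (A' - D))
    (hne : w₁ ≠ 0 ∧ w₂ ≠ 0 ∧ w₃ ≠ 0 ∧ w₄ ≠ 0)
    (hQ₂ : w₂.1 * w₂.2 < 0 ∧ w₄.1 * w₄.2 < 0)
    (u v : ℝ × ℝ)
    (huΛ : u ∈ Λ) (hu0 : u ≠ 0) (huQ : u.1 * u.2 ≥ 0)
    (humin : ∀ w ∈ Λ, w ≠ 0 → w.1 * w.2 ≥ 0 → |u.1| + |u.2| ≤ |w.1| + |w.2|)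
    (hvΛ : v ∈ Λ) (hvQ : v.1 * v.2 < 0)
    (hvmin : ∀ w ∈ Λ, w.1 * w.2 < 0 → |v.1| + |v.2| ≤ |w.1| + |w.2|) :
    (b₁ - a₁) + (d₂ - c₂) ≥ (|u.1| + |u.2|) + (|v.1| + |v.2|) := by
  obtain ⟨hne1, hne2, hne3, hne4⟩ := hne
  obtain ⟨hQ2, hQ4⟩ := hQ₂
  subst hΛ
  have e1 : w₁ = (c₁ - a₁, a₂ - c₂) := by
    rw [hw₁, hA, hC', hA', hC]; simp [Prod.ext_iff]
  have e2 : w₂ = (c₁ - b₁, b₂ - c₂) := by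
    rw [hw₂, hB, hC', hB', hC]; simp [Prod.ext_iff]
  have e3 : w₃ = (d₁ - b₁, b₂ - d₂) := by
    rw [hw₃, hB, hD', hB', hD]; simp [Prod.ext_iff]
  have e4 : w₄ = (d₁ - a₁, a₂ - d₂) := by
    rw [hw₄, hA, hD', hA', hD]; simp [Prod.ext_iff]
  have m1 : w₁ ∈ {x : ℝ × ℝ | ∃ m n : ℤ, x = m • w₁' + n • w₂'} := by
    have : w₁ = -(A - A') - (C - C') := by rw [hw₁]; abel
    rw [this]; exact lat_neg_sub hAA' hCC'
  have m2 : w₂ ∈ {x : ℝ × ℝ | ∃ m n : ℤ, x = m • w₁' + n • w₂'} := by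
    have : w₂ = -(B - B') - (C - C') := by rw [hw₂]; abel
    rw [this]; exact lat_neg_sub hBB' hCC'
  have m3 : w₃ ∈ {x : ℝ × ℝ | ∃ m n : ℤ, x = m • w₁' + n • w₂'} := by
    have : w₃ = -(B - B') - (D - D') := by rw [hw₃]; abel
    rw [this]; exact lat_neg_sub hBB' hDD'
  have m4 : w₄ ∈ {x : ℝ × ℝ | ∃ m n : ℤ, x = m • w₁' + n • w₂'} := by
    have : w₄ = -(A - A') - (D - D') := by rw [hw₄]; abel
    rw [this]; exact lat_neg_sub hAA' hDD'
  have i1 : |u.1| + |u.2| ≤ |w₁.1| + |w₁.2| := by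
    refine humin _ m1 hne1 ?_
    rw [e1]
    exact mul_nonneg (by simp; linarith [hc₁.1]) (by simp; linarith [ha₂.1])
  have i3 : |u.1| + |u.2| ≤ |w₃.1| + |w₃.2| := by
    refine humin _ m3 hne3 ?_
    rw [e3]; simp only
    nlinarith [mul_nonneg (show (0:ℝ) ≤ b₁ - d₁ by linarith [hd₁.2])
      (show (0:ℝ) ≤ d₂ - b₂ by linarith [hb₂.2])]
  have i2 : |v.1| + |v.2| ≤ |w₂.1| + |w₂.2| := hvmin _ m2 hQ2
  have i4 : |v.1| + |v.2| ≤ |w₄.1| + |w₄.2| := hvmin _ m4 hQ4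
  rw [e1] at i1; rw [e2] at i2; rw [e3] at i3; rw [e4] at i4
  simp only at i1 i2 i3 i4
  rw [abs_of_nonneg (show (0:ℝ) ≤ c₁ - a₁ by linarith [hc₁.1]),
    abs_of_nonneg (show (0:ℝ) ≤ a₂ - c₂ by linarith [ha₂.1])] at i1
  rw [abs_of_nonpos (show d₁ - b₁ ≤ (0:ℝ) by linarith [hd₁.2]),
    abs_of_nonpos (show b₂ - d₂ ≤ (0:ℝ) by linarith [hb₂.2])] at i3
  rw [abs_of_nonpos (show c₁ - b₁ ≤ (0:ℝ) by linarith [hc₁.2]),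
    abs_of_nonneg (show (0:ℝ) ≤ b₂ - c₂ by linarith [hb₂.1])] at i2
  rw [abs_of_nonneg (show (0:ℝ) ≤ d₁ - a₁ by linarith [hd₁.1]),
    abs_of_nonpos (show a₂ - d₂ ≤ (0:ℝ) by linarith [ha₂.2])] at i4
  linarith
end
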